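/- arXiv:2107.03499 — 2 statements merged into one kernel-verified Lean document; each statement's English description precedes it below -/
import Mathlib

section
/- Let m ≥ 2 be an integer, let p₁ : ℝ → ℝ be 2π-periodic and C², and let u₁ : ℝ → ℝ be 2π-periodic and continuous. Write p₁⁺(t) := p₁(t + 2π/m), p₁⁻(t) := p₁(t − 2π/m), and similarly for u₁. Then the function t ↦ sin(π/m) ( (p₁')⁺(t) + (p₁')⁻(t) + 2 p₁'(t) + u₁⁺(t) + u₁⁻(t) − 2 u₁(t) ) + cos(π/m) ( p₁⁻(t) − p₁⁺(t) ) vanishes identically on ℝ if and only if for every k ∈ ℤ the Fourier coefficients satisfy −2 i sin(π/m) sin²(πk/m) · û₁(k) = ( 2 k sin(π/m) cos²(πk/m) − cos(π/m) sin(2πk/m) ) · p̂₁(k). -/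
/-!
Taking Fourier coefficients turns the shifts `t ↦ t ± 2π/m` into multiplication by
`e^{±2πik/m}` and differentiation into multiplication by `ik`. With the double-angle formulas the
`k`-th coefficient of the expression becomes `2i (R_k p̂₁(k) - L_k û₁(k))`, where `L_k`, `R_k` are
the two sides of the claimed identity. A continuous periodic function vanishes exactly when all its
Fourier coefficients do, by completeness of the Fourier basis of `L²(AddCircle)`.
-/

open Real

noncomputable def fourierCoef (f : ℝ → ℝ) (k : ℤ) : ℂ :=
  (1 / (2 * Real.pi)) * ∫ t in (0:ℝ)..(2 * Real.pi),
    (f t : ℂ) * Complex.exp (-Complex.I * k * t)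

open Function Complex MeasureTheory intervalIntegral

theorem Function.Periodic.deriv {𝕜 F : Type*} [NontriviallyNormedField 𝕜] [NormedAddCommGroup F]
    [NormedSpace 𝕜 F] {f : 𝕜 → F} {c : 𝕜} (h : Periodic f c) : Periodic (deriv f) c := fun x => by
  rw [← deriv_comp_add_const, h.funext]

theorem exp_neg_I_mul_intCast_mul_two_pi (k : ℤ) : exp (-I * k * (2 * π : ℝ)) = 1 := by
  rw [show -I * k * (2 * π : ℝ) = (-k : ℤ) * (2 * π * I) by push_cast; ring]
  exact exp_int_mul_two_pi_mul_I _

section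
variable {f g : ℝ → ℝ}

theorem intervalIntegrable_fourierCoef_integrand (hf : Continuous f) (k : ℤ) (a b : ℝ) :
    IntervalIntegrable (fun t : ℝ => (f t : ℂ) * exp (-I * k * t)) volume a b :=
  (by fun_prop : Continuous _).intervalIntegrable a b

theorem fourierCoef_add (hf : Continuous f) (hg : Continuous g) (k : ℤ) :
    fourierCoef (fun t => f t + g t) k = fourierCoef f k + fourierCoef g k := by
  simp only [fourierCoef, ← mul_add, ofReal_add, add_mul,
    ← integral_add (intervalIntegrable_fourierCoef_integrand hf k _ _)
      (intervalIntegrable_fourierCoef_integrand hg k _ _)]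

theorem fourierCoef_sub (hf : Continuous f) (hg : Continuous g) (k : ℤ) :
    fourierCoef (fun t => f t - g t) k = fourierCoef f k - fourierCoef g k := by
  simp only [fourierCoef, ← mul_sub, ofReal_sub, sub_mul,
    ← integral_sub (intervalIntegrable_fourierCoef_integrand hf k _ _)
      (intervalIntegrable_fourierCoef_integrand hg k _ _)]

theorem fourierCoef_const_mul (c : ℝ) (f : ℝ → ℝ) (k : ℤ) :
    fourierCoef (fun t => c * f t) k = c * fourierCoef f k := by
  simp only [fourierCoef, ofReal_mul, mul_assoc, intervalIntegral.integral_const_mul]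
  ring

theorem fourierCoef_comp_add_const (hper : Periodic f (2 * π)) (a : ℝ) (k : ℤ) :
    fourierCoef (fun t => f (t + a)) k = exp (I * k * a) * fourierCoef f k := by
  set g : ℝ → ℂ := fun t => (f t : ℂ) * exp (-I * k * t)
  have hg : Periodic g (2 * π) := fun t => by
    simp only [g, hper t, ofReal_add, mul_add, Complex.exp_add, exp_neg_I_mul_intCast_mul_two_pi,
      mul_one]
  have hshift : ∀ t : ℝ, (f (t + a) : ℂ) * exp (-I * k * t) = exp (I * k * a) * g (t + a) :=
    fun t => by
      rw [mul_left_comm, ← Complex.exp_add]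
      congr 2
      push_cast
      ring
  simp only [fourierCoef, hshift, intervalIntegral.integral_const_mul]
  rw [integral_comp_add_right g a, zero_add, add_comm, hg.intervalIntegral_add_eq a 0, zero_add]
  ring

theorem fourierCoef_comp_sub_const (hper : Periodic f (2 * π)) (a : ℝ) (k : ℤ) :
    fourierCoef (fun t => f (t - a)) k = exp (-(I * k * a)) * fourierCoef f k := by
  simpa [sub_eq_add_neg] using fourierCoef_comp_add_const hper (-a) k

theorem fourierCoef_deriv (hf : ContDiff ℝ 1 f) (hper : Periodic f (2 * π)) (k : ℤ) :
    fourierCoef (deriv f) k = I * k * fourierCoef f k := by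
  have hf' : ∀ t, HasDerivAt (fun t : ℝ => (f t : ℂ)) ((deriv f t : ℝ) : ℂ) t := fun t =>
    ((hf.differentiable one_ne_zero) t).hasDerivAt.ofReal_comp
  have he : ∀ t : ℝ, HasDerivAt (fun t : ℝ => exp (-I * k * t)) (exp (-I * k * t) * (-I * k)) t :=
    fun t => by simpa using ((hasDerivAt_id (t : ℂ)).const_mul (-I * k)).cexp.comp_ofReal
  have hparts := integral_mul_deriv_eq_deriv_mul (a := 0) (b := 2 * π) (fun t _ => hf' t)
    (fun t _ => he t) ((continuous_ofReal.comp (hf.continuous_deriv le_rfl)).intervalIntegrable _ _)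
    ((by fun_prop : Continuous _).intervalIntegrable _ _)
  rw [hper.eq, exp_neg_I_mul_intCast_mul_two_pi, ofReal_zero, mul_zero, Complex.exp_zero,
    sub_self, zero_sub] at hparts
  rw [fourierCoef, fourierCoef, neg_eq_iff_eq_neg.mp hparts.symm]
  simp only [← mul_assoc, intervalIntegral.integral_mul_const]
  ring

end

theorem ContinuousMap.eq_zero_of_fourierCoeff_eq_zero {T : ℝ} [Fact (0 < T)]
    (g : C(AddCircle T, ℂ)) (h : ∀ n, fourierCoeff g n = 0) : g = 0 := by
  apply ContinuousMap.toLp_injective (E := ℂ) (p := 2) (𝕜 := ℂ) AddCircle.haarAddCircle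
  rw [map_zero]
  apply fourierBasis.repr.injective
  ext n
  rw [fourierBasis_repr, fourierCoeff_toLp]
  simp [h n]

theorem Function.Periodic.eq_zero_of_fourierCoeffOn_eq_zero {T a : ℝ} (hT : 0 < T) {f : ℝ → ℂ}
    (hf : Continuous f) (hper : Periodic f T)
    (h : ∀ n, fourierCoeffOn (lt_add_of_pos_right a hT) f n = 0) : f = 0 := by
  have := Fact.mk hT
  let g : C(AddCircle T, ℂ) := ⟨hper.lift, continuous_coinduced_dom.mpr hf⟩
  have hg : ∀ n, fourierCoeff g n = 0 := fun n => by
    rw [fourierCoeff_eq_intervalIntegral _ n a, ← h n, fourierCoeffOn_eq_integral,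
      add_sub_cancel_left]
    rfl
  funext x
  exact DFunLike.congr_fun (g.eq_zero_of_fourierCoeff_eq_zero hg) (x : AddCircle T)

theorem fourierCoef_eq_fourierCoeffOn (f : ℝ → ℝ) (k : ℤ) :
    fourierCoef f k = fourierCoeffOn (lt_add_of_pos_right 0 two_pi_pos) (fun t => (f t : ℂ)) k := by
  rw [fourierCoeffOn_eq_integral, fourierCoef, add_sub_cancel_left, zero_add, real_smul]
  push_cast
  congr 1
  refine intervalIntegral.integral_congr fun t _ => ?_
  rw [fourier_coe_apply, smul_eq_mul, mul_comm]
  congr 2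
  field_simp
  push_cast
  ring

theorem forall_eq_zero_iff_fourierCoef_eq_zero {f : ℝ → ℝ} (hf : Continuous f)
    (hper : Periodic f (2 * π)) : (∀ t, f t = 0) ↔ ∀ k, fourierCoef f k = 0 := by
  refine ⟨fun h k => by simp [fourierCoef, h], fun h t => ?_⟩
  have hzero := Periodic.eq_zero_of_fourierCoeffOn_eq_zero two_pi_pos (by fun_prop)
    (fun t => by simp only [hper t]) fun k => (fourierCoef_eq_fourierCoeffOn f k).symm.trans (h k)
  simpa using congrFun hzero t

theorem eq_zero_iff_eq_of_eq_mul_sub {α : Type*} [Ring α] [NoZeroDivisors α] {a c x y : α}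
    (hc : c ≠ 0) (h : a = c * (y - x)) : a = 0 ↔ x = y := by
  rw [h, mul_eq_zero, or_iff_right hc, sub_eq_zero, eq_comm]

theorem stmt_5_general (m : ℕ) (p₁ u₁ : ℝ → ℝ)
    (hp : ContDiff ℝ 2 p₁) (hpper : ∀ t, p₁ (t + 2 * π) = p₁ t)
    (hu : Continuous u₁) (huper : ∀ t, u₁ (t + 2 * π) = u₁ t) :
    (∀ t : ℝ,
        Real.sin (π / m) *
            (deriv p₁ (t + 2 * π / m) + deriv p₁ (t - 2 * π / m) + 2 * deriv p₁ t
              + u₁ (t + 2 * π / m) + u₁ (t - 2 * π / m) - 2 * u₁ t)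
          + Real.cos (π / m) * (p₁ (t - 2 * π / m) - p₁ (t + 2 * π / m)) = 0)
    ↔ (∀ k : ℤ,
        -2 * Complex.I * (Real.sin (π / m) : ℂ) * (Real.sin (π * k / m) : ℂ) ^ 2
            * fourierCoef u₁ k
          = ((2 * k * Real.sin (π / m) * Real.cos (π * k / m) ^ 2
              - Real.cos (π / m) * Real.sin (2 * π * k / m) : ℝ) : ℂ)
            * fourierCoef p₁ k) := by
  have hp₁ : ContDiff ℝ 1 p₁ := hp.of_le one_le_two
  have hq : Continuous (deriv p₁) := hp₁.continuous_deriv le_rfl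
  have hqper : Periodic (deriv p₁) (2 * π) := Periodic.deriv hpper
  rw [forall_eq_zero_iff_fourierCoef_eq_zero (by fun_prop) fun t => ?periodic]
  case periodic =>
    simp only [add_right_comm t (2 * π), add_sub_right_comm t (2 * π), hpper _, huper _, hqper _]
  refine forall_congr' fun k => ?_
  simp (disch := fun_prop) only [fourierCoef_add, fourierCoef_sub, fourierCoef_const_mul,
    fourierCoef_comp_add_const hpper, fourierCoef_comp_add_const huper,
    fourierCoef_comp_add_const hqper, fourierCoef_comp_sub_const hpper,
    fourierCoef_comp_sub_const huper, fourierCoef_comp_sub_const hqper, fourierCoef_deriv hp₁ hpper]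
  refine eq_zero_iff_eq_of_eq_mul_sub (c := 2 * I) (by simp) ?_
  push_cast
  set z : ℂ := π * k / m
  rw [show I * k * (2 * π / m) = 2 * z * I by ring, show 2 * π * k / m = 2 * z by ring,
    ← neg_mul]
  set P := fourierCoef p₁ k
  set U := fourierCoef u₁ k
  set s := Complex.sin (π / m)
  set c := Complex.cos (π / m)
  linear_combination (-(s * I * k * P + s * U)) * two_cos (2 * z)
    + 2 * s * I * k * P * Complex.cos_two_mul z + 2 * s * U * Complex.cos_two_mul_eq_one_sub z
    + c * P * I * two_sin (2 * z)
    + (c * P * (exp (-(2 * z) * I) - exp (2 * z * I)) - 4 * s * U * sin z ^ 2) * I_sq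

/-- The first-order term `E₁₀` of the expansion of the billiard error function
vanishes identically if and only if, for every Fourier mode `k`,
`−2i sin(π/m) sin²(πk/m) û₁(k) = (2k sin(π/m) cos²(πk/m) − cos(π/m) sin(2πk/m)) p̂₁(k)`. -/
theorem stmt_5 (m : ℕ) (hm : 2 ≤ m) (p₁ u₁ : ℝ → ℝ)
    (hp : ContDiff ℝ 2 p₁) (hpper : ∀ t, p₁ (t + 2 * π) = p₁ t)
    (hu : Continuous u₁) (huper : ∀ t, u₁ (t + 2 * π) = u₁ t) :
    (∀ t : ℝ,
        Real.sin (π / m) *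
            (deriv p₁ (t + 2 * π / m) + deriv p₁ (t - 2 * π / m) + 2 * deriv p₁ t
              + u₁ (t + 2 * π / m) + u₁ (t - 2 * π / m) - 2 * u₁ t)
          + Real.cos (π / m) * (p₁ (t - 2 * π / m) - p₁ (t + 2 * π / m)) = 0)
    ↔ (∀ k : ℤ,
        -2 * Complex.I * (Real.sin (π / m) : ℂ) * (Real.sin (π * k / m) : ℂ) ^ 2
            * fourierCoef u₁ k
          = ((2 * k * Real.sin (π / m) * Real.cos (π * k / m) ^ 2
              - Real.cos (π / m) * Real.sin (2 * π * k / m) : ℝ) : ℂ)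
            * fourierCoef p₁ k) :=
  stmt_5_general m p₁ u₁ hp hpper hu huper
end

section
/- Let m ≥ 1 be an integer and let r ∈ {1, …, 4m+1} with r ≠ 2m+1. Define ω := e^{2πi r/(2m+1)}, c_{m,r} := −4(2m+1) csc(π/(2m+1)) / (ω − 1)², and for n, k ∈ ℤ, 𝒫^m_r(n,k) := c_{m,r} · ( (ω − 1) cos(π/(2m+1)) − i (ω + 1) sin(π/(2m+1)) (k(4m+2) + r) ) · ( (ω + 1) sin(π/(2m+1)) ((4m+2)(n − k) − r) − i (ω − 1) cos(π/(2m+1)) ). Then 𝒫^m_r splits as a product of two linear factors: 𝒫^m_r(n,k) = −16 i · (2m+1)³ sin(π/(2m+1)) cot²(πr/(2m+1)) · (k − c**_{m,r}) · (n − k + c**_{m,r}), where c**_{m,r} := ( cot(π/(2m+1)) tan(πr/(2m+1)) − r ) / (4m + 2). -/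
/-!
Put `a = π/(2m+1)`, `b = πr/(2m+1)` and `ω = e^{2ib}`. Then `ω - 1 = 2i sin b · e^{ib}` and
`ω + 1 = 2 cos b · e^{ib}`, so each factor of `𝒫` is `e^{ib} (4m+2) sin a cos b` times a linear
form in `k` (resp. `n - k`); the constant terms of both linear forms are `c**`, because
`(4m+2) c** sin a cos b = cos a sin b - r sin a cos b`. The prefactor `c` cancels `e^{2ib}` and
turns `cos² b / sin² b` into `cot² b`. The hypotheses on `r` force `m ≥ 1` and `2m+1 ∤ r`, so
`sin a ≠ 0` and `sin b ≠ 0`; `cos b ≠ 0` because `2m+1` is odd.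
-/

open Real

namespace Complex

theorem exp_two_mul_mul_I_sub_one (z : ℂ) :
    exp (2 * z * I) - 1 = 2 * I * sin z * exp (z * I) := by
  have h : exp (2 * z * I) = exp (z * I) * exp (z * I) := by rw [← exp_add]; ring_nf
  have h' : exp (-z * I) * exp (z * I) = 1 := by rw [← exp_add]; simp
  rw [sin, h]
  linear_combination h' + (exp (z * I) ^ 2 - exp (-z * I) * exp (z * I)) * I_sq

theorem exp_two_mul_mul_I_add_one (z : ℂ) :
    exp (2 * z * I) + 1 = 2 * cos z * exp (z * I) := by
  have h : exp (2 * z * I) = exp (z * I) * exp (z * I) := by rw [← exp_add]; ring_nf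
  have h' : exp (-z * I) * exp (z * I) = 1 := by rw [← exp_add]; simp
  rw [cos, h]
  linear_combination -h'

end Complex

namespace Real

theorem sin_pi_mul_div_ne_zero {r N : ℤ} (hN : N ≠ 0) (hr : ¬ N ∣ r) :
    sin (π * r / N) ≠ 0 := by
  rw [Ne, sin_eq_zero_iff]
  rintro ⟨j, hj⟩
  have hN' : (N : ℝ) ≠ 0 := by exact_mod_cast hN
  have hjN : ((j * N : ℤ) : ℝ) = r := by
    push_cast
    field_simp at hj
    linarith [hj]
  exact hr ⟨j, by rw [mul_comm]; exact_mod_cast hjN.symm⟩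

theorem cos_pi_mul_div_ne_zero_of_odd {r N : ℤ} (hN : Odd N) :
    cos (π * r / N) ≠ 0 := by
  rw [Ne, cos_eq_zero_iff]
  rintro ⟨j, hj⟩
  have hN' : (N : ℝ) ≠ 0 := by exact_mod_cast (show N ≠ 0 by rintro rfl; simp at hN)
  have hjN : (((2 * j + 1) * N : ℤ) : ℝ) = ((2 * r : ℤ) : ℝ) := by
    push_cast
    field_simp at hj
    linarith [hj]
  have hodd : Odd ((2 * j + 1) * N) := (odd_two_mul_add_one j).mul hN
  rw [Int.cast_injective hjN] at hodd
  exact Int.not_odd_iff_even.mpr (even_two_mul r) hodd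

end Real

theorem rationalCaustic_coeff_factorization {a b L r κ : ℝ}
    (hsa : sin a ≠ 0) (hsb : sin b ≠ 0) (hcb : cos b ≠ 0)
    (hκ : L * κ = cot a * tan b - r) {ω c : ℂ} (hω : ω = Complex.exp (2 * b * Complex.I))
    (hc : c = -2 * L / (sin a : ℂ) / (ω - 1) ^ 2) (x y : ℂ) :
    c * ((ω - 1) * (cos a : ℂ) - Complex.I * (ω + 1) * (sin a : ℂ) * (x * L + r))
        * ((ω + 1) * (sin a : ℂ) * (L * y - r) - Complex.I * (ω - 1) * (cos a : ℂ))
      = -2 * Complex.I * L ^ 3 * (sin a : ℂ) * (cot b : ℂ) ^ 2 * (x - κ) * (y + κ) := by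
  set E := Complex.exp (b * Complex.I)
  have hE : E ≠ 0 := Complex.exp_ne_zero _
  have hsa' : (sin a : ℂ) ≠ 0 := by exact_mod_cast hsa
  have hsb' : (sin b : ℂ) ≠ 0 := by exact_mod_cast hsb
  have hsub : ω - 1 = 2 * Complex.I * (sin b : ℂ) * E := by
    rw [hω, Complex.exp_two_mul_mul_I_sub_one, Complex.ofReal_sin]
  have hadd : ω + 1 = 2 * (cos b : ℂ) * E := by
    rw [hω, Complex.exp_two_mul_mul_I_add_one, Complex.ofReal_cos]
  have hκ' : sin a * cos b * (L * κ) = cos a * sin b - r * sin a * cos b := by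
    rw [hκ, cot_eq_cos_div_sin, tan_eq_sin_div_cos]
    field_simp
  have hκC : (sin a : ℂ) * cos b * (L * κ) = cos a * sin b - r * sin a * cos b := by
    exact_mod_cast hκ'
  have hA : (ω - 1) * (cos a : ℂ) - Complex.I * (ω + 1) * (sin a : ℂ) * (x * L + r)
      = -2 * Complex.I * E * L * sin a * cos b * (x - κ) := by
    rw [hsub, hadd]
    linear_combination (-2 * Complex.I * E) * hκC
  have hB : (ω + 1) * (sin a : ℂ) * (L * y - r) - Complex.I * (ω - 1) * (cos a : ℂ)
      = 2 * E * L * sin a * cos b * (y + κ) := by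
    rw [hsub, hadd]
    linear_combination (-2 * E) * hκC - 2 * E * sin b * cos a * Complex.I_sq
  have hc' : c = L / (2 * sin a * sin b ^ 2 * E ^ 2) := by
    rw [hc, hsub, mul_pow, mul_pow, mul_pow, Complex.I_sq]
    field_simp
  rw [mul_assoc c, hA, hB, hc', cot_eq_cos_div_sin]
  push_cast
  field_simp

theorem stmt_11_general (m r : ℕ) (hr1 : 1 ≤ r) (hr2 : r ≤ 4 * m + 1)
    (hr3 : r ≠ 2 * m + 1)
    (ω : ℂ) (hω : ω = Complex.exp (2 * Real.pi * Complex.I * r / (2 * m + 1)))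
    (c : ℂ) (hc : c = -4 * (2 * (m : ℂ) + 1)
        * ((Real.sin (π / (2 * m + 1)) : ℂ))⁻¹ / (ω - 1) ^ 2)
    (cs : ℝ) (hcs : cs = (Real.cot (π / (2 * m + 1)) * Real.tan (π * r / (2 * m + 1)) - r)
        / (4 * m + 2)) :
    ∀ n k : ℤ,
      c * ((ω - 1) * (Real.cos (π / (2 * m + 1)) : ℂ)
            - Complex.I * (ω + 1) * (Real.sin (π / (2 * m + 1)) : ℂ)
              * ((k : ℂ) * (4 * m + 2) + r))
        * ((ω + 1) * (Real.sin (π / (2 * m + 1)) : ℂ)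
              * ((4 * m + 2) * ((n : ℂ) - k) - r)
            - Complex.I * (ω - 1) * (Real.cos (π / (2 * m + 1)) : ℂ))
      = -16 * Complex.I * (2 * (m : ℂ) + 1) ^ 3
          * (Real.sin (π / (2 * m + 1)) : ℂ)
          * (Real.cot (π * r / (2 * m + 1)) : ℂ) ^ 2
          * ((k : ℂ) - (cs : ℂ)) * ((n : ℂ) - (k : ℂ) + (cs : ℂ)) := by
  intro n k
  have hr_not_dvd : ¬ (2 * m + 1) ∣ r := by
    rintro ⟨q, rfl⟩
    have : q < 2 := by nlinarith
    interval_cases q <;> omega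
  have hone_not_dvd : ¬ (2 * m + 1) ∣ 1 := by rw [Nat.dvd_one]; omega
  have hsa : sin (π / (2 * m + 1)) ≠ 0 := by
    simpa using sin_pi_mul_div_ne_zero (r := 1) (N := 2 * m + 1) (by omega)
      (by exact_mod_cast hone_not_dvd)
  have hsb : sin (π * r / (2 * m + 1)) ≠ 0 := by
    simpa using sin_pi_mul_div_ne_zero (r := r) (N := 2 * m + 1) (by omega)
      (by exact_mod_cast hr_not_dvd)
  have hcb : cos (π * r / (2 * m + 1)) ≠ 0 := by
    simpa using cos_pi_mul_div_ne_zero_of_odd (r := r) (odd_two_mul_add_one (m : ℤ))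
  have hκ : (4 * m + 2 : ℝ) * cs = cot (π / (2 * m + 1)) * tan (π * r / (2 * m + 1)) - r := by
    rw [hcs]; field_simp
  have key := rationalCaustic_coeff_factorization hsa hsb hcb hκ (ω := ω) (c := c)
    (by rw [hω]; congr 1; push_cast; ring) (by rw [hc]; push_cast; ring) (k : ℂ) ((n : ℂ) - k)
  convert key using 2
  all_goals push_cast; ring

/-- Splitting of the polynomial `𝒫^m_r(n,k)` from the cohomological equation of
second-order preservation of the `1/(2m+1)`-rational caustic into a product of
two linear factors:
`𝒫^m_r(n,k) = −16i (2m+1)³ sin(π/(2m+1)) cot²(πr/(2m+1)) (k − c**)(n − k + c**)`. -/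
theorem stmt_11 (m r : ℕ) (hm : 1 ≤ m) (hr1 : 1 ≤ r) (hr2 : r ≤ 4 * m + 1)
    (hr3 : r ≠ 2 * m + 1)
    (ω : ℂ) (hω : ω = Complex.exp (2 * Real.pi * Complex.I * r / (2 * m + 1)))
    (c : ℂ) (hc : c = -4 * (2 * (m : ℂ) + 1)
        * ((Real.sin (π / (2 * m + 1)) : ℂ))⁻¹ / (ω - 1) ^ 2)
    (cs : ℝ) (hcs : cs = (Real.cot (π / (2 * m + 1)) * Real.tan (π * r / (2 * m + 1)) - r)
        / (4 * m + 2)) :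
    ∀ n k : ℤ,
      c * ((ω - 1) * (Real.cos (π / (2 * m + 1)) : ℂ)
            - Complex.I * (ω + 1) * (Real.sin (π / (2 * m + 1)) : ℂ)
              * ((k : ℂ) * (4 * m + 2) + r))
        * ((ω + 1) * (Real.sin (π / (2 * m + 1)) : ℂ)
              * ((4 * m + 2) * ((n : ℂ) - k) - r)
            - Complex.I * (ω - 1) * (Real.cos (π / (2 * m + 1)) : ℂ))
      = -16 * Complex.I * (2 * (m : ℂ) + 1) ^ 3
          * (Real.sin (π / (2 * m + 1)) : ℂ)
          * (Real.cot (π * r / (2 * m + 1)) : ℂ) ^ 2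
          * ((k : ℂ) - (cs : ℂ)) * ((n : ℂ) - (k : ℂ) + (cs : ℂ)) :=
  stmt_11_general m r hr1 hr2 hr3 ω hω c hc cs hcs
end
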